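/- For every integer n ≥ 1 and every 1 ≤ k ≤ n, the initial segment of the enumeration of positive roots associated to the reduced word i^k is given explicitly by: (β_1^{i^k}, β_2^{i^k}, …, β_{k(n−k+1)}^{i^k}) = (α_{k,k}, α_{k−1,k}, …, α_{1,k}, α_{k,k+1}, α_{k−1,k+1}, …, α_{1,k+1}, …, α_{k,n}, α_{k−1,n}, …, α_{1,n}); equivalently, for all k ≤ j ≤ n and 1 ≤ i ≤ k, β_ℓ^{i^k} = (i,j) where ℓ = (j−k)·k + (k − i + 1). -/

import Mathlib

/-- The adjacent transposition `s_i` swapping `i` and `i+1` (as a permutation of `ℕ`,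
with 1-based conventions: the relevant generators are `s_1, …, s_n`). -/
def sw (i : ℕ) : Equiv.Perm ℕ := Equiv.swap i (i + 1)

/-- The product `s_{i_1} ⋯ s_{i_r}` of the adjacent transpositions along a word. -/
def wordProd (w : List ℕ) : Equiv.Perm ℕ := (w.map sw).prod

/-- The longest element `w_0` of `S_{n+1}`: the order-reversing permutation
`i ↦ n+2−i` of `{1,…,n+1}` (extended by the identity outside). -/
def w0 (n : ℕ) : Equiv.Perm ℕ :=
  Function.Involutive.toPerm (fun i => if 1 ≤ i ∧ i ≤ n + 1 then n + 2 - i else i)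
    (by intro i; dsimp only; split_ifs <;> omega)

/-- The number of inversions of a permutation of `{1,…,n+1}`. -/
def inversions (n : ℕ) (w : Equiv.Perm ℕ) : ℕ :=
  ((Finset.Icc 1 (n + 1) ×ˢ Finset.Icc 1 (n + 1)).filter
    (fun p => p.1 < p.2 ∧ w p.2 < w p.1)).card

/-- Part (A) of the word `i^k`: the word
`(k,k−1,…,1, k+1,k,…,2, …, n,n−1,…,n−k+1)` of the permutation `w_{k,n}`. -/
def wordA (n k : ℕ) : List ℕ :=
  ((List.range (n - k + 1)).map (fun m => (List.range k).map (fun t => k + m - t))).flatten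

/-- Part (B) of the word `i^k`: the word
`(n,n−1,…,n−k+2, n,n−1,…,n−k+3, …, n,n−1, n)` of the permutation `S_{n−(k−1)+[k−1]}`. -/
def wordB (n k : ℕ) : List ℕ :=
  ((List.range (k - 1)).map (fun b => (List.range (k - 1 - b)).map (fun t => n - t))).flatten

/-- Part (C) of the word `i^k`: the word
`(1,2,…,n−k, 1,2,…,n−k−1, …, 1,2, 1)` of the permutation `S_{[n−k]}`. -/
def wordC (n k : ℕ) : List ℕ :=
  ((List.range (n - k)).map (fun b => (List.range (n - k - b)).map (fun t => t + 1))).flatten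

/-- The reduced word `i^k` for the longest element `w_0`. -/
def ik (n k : ℕ) : List ℕ := wordA n k ++ wordB n k ++ wordC n k

/-- The positive root `β_ℓ^i = s_{i_1}⋯s_{i_{ℓ−1}}(α_{i_ℓ})` (1-based `ℓ`) associated to a
reduced word `w = (i_1,…,i_N)`, encoded as the pair
`(σ(i_ℓ), σ(i_ℓ+1) − 1)` where `σ = s_{i_1}⋯s_{i_{ℓ−1}}`. -/
def beta (w : List ℕ) (l : ℕ) : ℕ × ℕ :=
  (wordProd (w.take (l - 1)) (w.getD (l - 1) 0),
   wordProd (w.take (l - 1)) (w.getD (l - 1) 0 + 1) - 1)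

/-! The first `k(n−k+1)` letters of `i^k` form part (A), the concatenation of the descending
runs `(k+m, …, m+1)`, `0 ≤ m ≤ n−k`. The product of the first `M` runs sends `x ↦ k+x` on
`[1, M]` and `x ↦ x−M` on `[M+1, M+k]`, while the first `t` letters of the next run fix
`k+M−t` and send `k+M−t+1` to `k+M+1`. With `M = j−k` and `t = k−i`, position `ℓ = Mk+t+1`
carries the letter `k+M−t`, so `σ` sends it to `k−t = i` and its successor to `k+M+1 = j+1`. -/

def descRun (a r : ℕ) : List ℕ := (List.range r).map (fun t => a - t)

def descBlocks (k M : ℕ) : List ℕ := ((List.range M).map (fun m => descRun (k + m) k)).flatten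

lemma wordProd_append (u v : List ℕ) : wordProd (u ++ v) = wordProd u * wordProd v := by
  simp [wordProd]

lemma beta_append_cons (u v : List ℕ) (c : ℕ) :
    beta (u ++ c :: v) (u.length + 1) = (wordProd u c, wordProd u (c + 1) - 1) := by
  simp [beta]

lemma flatten_range_eq_append {α : Type*} (f : ℕ → List α) {M R : ℕ} (h : M < R) :
    ∃ S, ((List.range R).map f).flatten = ((List.range M).map f).flatten ++ f M ++ S := by
  obtain ⟨s, rfl⟩ : ∃ s, R = M + 1 + s := ⟨R - (M + 1), by omega⟩
  refine ⟨((List.range s).map (fun m => f (M + 1 + m))).flatten, ?_⟩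
  rw [List.range_add, List.range_succ, List.map_append, List.flatten_append, List.map_append,
    List.flatten_append]
  simp [Function.comp_def]

lemma descRun_eq_append_cons (a : ℕ) {t r : ℕ} (h : t < r) :
    ∃ S, descRun a r = descRun a t ++ (a - t) :: S := by
  obtain ⟨s, rfl⟩ : ∃ s, r = t + (s + 1) := ⟨r - (t + 1), by omega⟩
  refine ⟨(List.range s).map (fun m => a - (t + (m + 1))), ?_⟩
  rw [descRun, List.range_add, List.range_succ_eq_map, List.map_append]
  simp [descRun]

lemma length_descRun (a r : ℕ) : (descRun a r).length = r := by
  simp [descRun]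

lemma length_descBlocks (k M : ℕ) : (descBlocks k M).length = M * k := by
  simp [descBlocks, List.length_flatten, Function.comp_def, length_descRun]

lemma wordProd_nil : wordProd [] = 1 := rfl

lemma wordProd_singleton (i : ℕ) : wordProd [i] = Equiv.swap i (i + 1) := by
  simp [wordProd, sw]

lemma wordProd_descRun_apply {a r : ℕ} (h : r ≤ a) (x : ℕ) :
    wordProd (descRun a r) x =
      if x = a - r + 1 then a + 1 else if a - r + 2 ≤ x ∧ x ≤ a + 1 then x - 1 else x := by
  induction r generalizing x with
  | zero =>
    rw [descRun, List.range_zero, List.map_nil, wordProd_nil, Equiv.Perm.one_apply]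
    split_ifs <;> omega
  | succ r ih =>
    rw [descRun, List.range_succ, List.map_append, List.map_singleton, wordProd_append,
      Equiv.Perm.mul_apply, ← descRun, ih (by omega), wordProd_singleton, Equiv.swap_apply_def]
    split_ifs <;> omega

lemma wordProd_descBlocks_apply (k M x : ℕ) :
    wordProd (descBlocks k M) x =
      if 1 ≤ x ∧ x ≤ M then k + x else if M + 1 ≤ x ∧ x ≤ M + k then x - M else x := by
  induction M generalizing x with
  | zero =>
    rw [descBlocks, List.range_zero, List.map_nil, List.flatten_nil, wordProd_nil,
      Equiv.Perm.one_apply]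
    split_ifs <;> omega
  | succ M ih =>
    rw [descBlocks, List.range_succ, List.map_append, List.flatten_append, List.map_singleton,
      List.flatten_singleton, wordProd_append, Equiv.Perm.mul_apply, ← descBlocks, ih,
      wordProd_descRun_apply (by omega)]
    split_ifs <;> omega

lemma wordA_eq_descBlocks (n k : ℕ) : wordA n k = descBlocks k (n - k + 1) := rfl

lemma ik_eq_append_cons {n k M t : ℕ} (hM : M ≤ n - k) (ht : t < k) :
    ∃ S, ik n k = descBlocks k M ++ descRun (k + M) t ++ (k + M - t) :: S := by
  obtain ⟨S₁, hS₁⟩ := flatten_range_eq_append (fun m => descRun (k + m) k)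
    (show M < n - k + 1 by omega)
  obtain ⟨S₂, hS₂⟩ := descRun_eq_append_cons (k + M) ht
  refine ⟨S₂ ++ S₁ ++ wordB n k ++ wordC n k, ?_⟩
  rw [ik, wordA_eq_descBlocks, descBlocks, hS₁, ← descBlocks, hS₂]
  simp

theorem ik_initial_segment_explicit_general (n k : ℕ) :
    ∀ i j : ℕ, 1 ≤ i → i ≤ k → k ≤ j → j ≤ n →
      beta (ik n k) ((j - k) * k + (k - i + 1)) = (i, j) := by
  intro i j hi hik hkj hjn
  obtain ⟨S, hS⟩ := ik_eq_append_cons (show j - k ≤ n - k by omega) (show k - i < k by omega)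
  have hlen : (descBlocks k (j - k) ++ descRun (k + (j - k)) (k - i)).length
      = (j - k) * k + (k - i) := by
    simp only [List.length_append, length_descBlocks, length_descRun]
  rw [hS, ← add_assoc, ← hlen, beta_append_cons, wordProd_append, Prod.mk.injEq]
  simp only [Equiv.Perm.mul_apply, wordProd_descRun_apply (show k - i ≤ k + (j - k) by omega),
    wordProd_descBlocks_apply]
  constructor <;> split_ifs <;> omega

/-- The initial segment of the enumeration of positive roots associated to `i^k` is
`(α_{k,k}, α_{k−1,k}, …, α_{1,k}, α_{k,k+1}, …, α_{1,k+1}, …, α_{k,n}, …, α_{1,n})`: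
for all `k ≤ j ≤ n` and `1 ≤ i ≤ k`, the root at position `ℓ = (j−k)·k + (k−i+1)`
is `α_{i,j}`. -/
theorem ik_initial_segment_explicit (n k : ℕ) (hn : 1 ≤ n) (hk1 : 1 ≤ k) (hkn : k ≤ n) :
    ∀ i j : ℕ, 1 ≤ i → i ≤ k → k ≤ j → j ≤ n →
      beta (ik n k) ((j - k) * k + (k - i + 1)) = (i, j) :=
  ik_initial_segment_explicit_general n k
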